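/- arXiv:1303.5330 — 8 statements merged into one kernel-verified Lean document; each statement's English description precedes it below -/
import Mathlib

section
/- Let C > 0 and α ∈ (0,1). Suppose v : [0,∞) → ℝ is nonnegative and differentiable, and its derivative satisfies v'(t) ≤ -C·v(t)^α for all t ≥ 0. Then v(t) = 0 for every t ≥ v(0)^{1-α}/(C(1-α)). (This is the finite-time case 0 ≤ α < 1 of the Lyapunov comparison theorem, applied to v(t) = V(z(t)) along a trajectory.) -/
/-!
While `v > 0`, the chain rule turns `v' ≤ -C v^α` into `(v^(1-α))' ≤ -C(1-α)`, so `v^(1-α)`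
decreases at least linearly with slope `C(1-α)`. Since `v` is nonincreasing, if `v t > 0`
then `v` stays positive on `[0, t]`, whence `0 < v(t)^(1-α) ≤ v(0)^(1-α) - C(1-α)t`, which
forces `t < v(0)^(1-α)/(C(1-α))`.
-/

open Set Real

lemma deriv_rpow_one_sub_le_of_deriv_le {v : ℝ → ℝ} {C α s : ℝ} (hα : α < 1)
    (hvs : 0 < v s) (hd : DifferentiableAt ℝ v s) (h : deriv v s ≤ -C * v s ^ α) :
    deriv (fun x => v x ^ (1 - α)) s ≤ -(C * (1 - α)) := by
  rw [(hd.hasDerivAt.rpow_const (Or.inl hvs.ne')).deriv]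
  have hcancel : v s ^ α * v s ^ (1 - α - 1) = 1 := by
    rw [← rpow_add hvs]
    norm_num
  calc deriv v s * (1 - α) * v s ^ (1 - α - 1)
      ≤ -C * v s ^ α * (1 - α) * v s ^ (1 - α - 1) :=
        mul_le_mul_of_nonneg_right (mul_le_mul_of_nonneg_right h (by linarith)) (by positivity)
    _ = -(C * (1 - α)) := by linear_combination (-C * (1 - α)) * hcancel

lemma rpow_one_sub_sub_le_of_deriv_le {v : ℝ → ℝ} {C α a b : ℝ} (hα : α < 1) (hab : a ≤ b)
    (hpos : ∀ s ∈ Icc a b, 0 < v s) (hdiff : ∀ s ∈ Icc a b, DifferentiableAt ℝ v s)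
    (hineq : ∀ s ∈ Icc a b, deriv v s ≤ -C * v s ^ α) :
    v b ^ (1 - α) - v a ^ (1 - α) ≤ -(C * (1 - α)) * (b - a) := by
  have hdiff' : ∀ s ∈ Icc a b, DifferentiableAt ℝ (fun x => v x ^ (1 - α)) s :=
    fun s hs => (hdiff s hs).rpow_const (Or.inl (hpos s hs).ne')
  refine (convex_Icc a b).image_sub_le_mul_sub_of_deriv_le
    (fun s hs => (hdiff' s hs).continuousAt.continuousWithinAt)
    (fun s hs => (hdiff' s (interior_subset hs)).differentiableWithinAt)
    (fun s hs => ?_) a (left_mem_Icc.mpr hab) b (right_mem_Icc.mpr hab) hab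
  have hs' := interior_subset hs
  exact deriv_rpow_one_sub_le_of_deriv_le hα (hpos s hs') (hdiff s hs') (hineq s hs')

theorem stmt0_general (C α : ℝ) (hC : 0 < C) (hα1 : α < 1)
    (v : ℝ → ℝ)
    (hnn : ∀ t, 0 ≤ t → 0 ≤ v t)
    (hdiff : ∀ t, 0 ≤ t → DifferentiableAt ℝ v t)
    (hineq : ∀ t, 0 ≤ t → deriv v t ≤ -C * v t ^ α) :
    ∀ t, v 0 ^ (1 - α) / (C * (1 - α)) ≤ t → v t = 0 := by
  intro t ht
  have hden : 0 < C * (1 - α) := mul_pos hC (by linarith)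
  have ht0 : 0 ≤ t := (div_nonneg (rpow_nonneg (hnn 0 le_rfl) _) hden.le).trans ht
  have hanti : AntitoneOn v (Ici 0) :=
    antitoneOn_of_deriv_nonpos (convex_Ici 0)
      (fun s hs => (hdiff s hs).continuousAt.continuousWithinAt)
      (fun s hs => (hdiff s (interior_subset hs)).differentiableWithinAt)
      (fun s hs => (hineq s (interior_subset hs)).trans <|
        mul_nonpos_of_nonpos_of_nonneg (neg_nonpos.mpr hC.le)
          (rpow_nonneg (hnn s (interior_subset hs)) α))
  by_contra hne
  have hvt : 0 < v t := (hnn t ht0).lt_of_ne' hne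
  have hdecay := rpow_one_sub_sub_le_of_deriv_le hα1 ht0
    (fun s hs => hvt.trans_le (hanti hs.1 ht0 hs.2))
    (fun s hs => hdiff s hs.1) (fun s hs => hineq s hs.1)
  rw [div_le_iff₀ hden] at ht
  linarith [rpow_pos_of_pos hvt (1 - α)]

/-- Finite-time case `0 < α < 1` of the Lyapunov comparison theorem: if a nonnegative
differentiable function `v` satisfies `v' ≤ -C v^α` on `[0,∞)`, then `v` vanishes for all
`t ≥ v(0)^{1-α}/(C(1-α))`. -/
theorem stmt0 (C α : ℝ) (hC : 0 < C) (hα0 : 0 < α) (hα1 : α < 1)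
    (v : ℝ → ℝ)
    (hnn : ∀ t, 0 ≤ t → 0 ≤ v t)
    (hdiff : ∀ t, 0 ≤ t → DifferentiableAt ℝ v t)
    (hineq : ∀ t, 0 ≤ t → deriv v t ≤ -C * v t ^ α) :
    ∀ t, v 0 ^ (1 - α) / (C * (1 - α)) ≤ t → v t = 0 :=
  stmt0_general C α hC hα1 v hnn hdiff hineq
end

section
/- Let C > 0 and α > 1. Suppose v : [0,∞) → ℝ is nonnegative and differentiable, and its derivative satisfies v'(t) ≤ -C·v(t)^α for all t ≥ 0. Then for every ε > 0 and every t ≥ ε^{1-α}/(C(α-1)) one has v(t) ≤ ε; in particular this time bound is independent of the initial value v(0). (This is the fixed-time attractivity case α > 1 of the Lyapunov comparison theorem.) -/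
/-!
Along the solution, `v ^ (1 - α)` grows at rate at least `C (α - 1)` as long as `v > 0`, because
`(v ^ (1 - α))' = (1 - α) v ^ (-α) v'`. If `v t > ε`, then `v > ε` on all of `[0, t]`, since
`v' < 0` whenever `v = ε` and so the sublevel set `{v ≤ ε}` can never be left. Hence
`C (α - 1) t < v t ^ (1 - α) < ε ^ (1 - α)`, a bound on `t` that does not involve `v 0`.
-/

open Set

theorem le_of_deriv_neg_at_level {v : ℝ → ℝ} {ε a b : ℝ}
    (hv : ∀ x ∈ Icc a b, DifferentiableAt ℝ v x) (hlevel : ∀ x ∈ Ico a b, v x = ε → deriv v x < 0)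
    (ha : v a ≤ ε) : ∀ x ∈ Icc a b, v x ≤ ε :=
  image_le_of_deriv_right_lt_deriv_boundary (B := fun _ => ε) (B' := fun _ => 0)
    (fun x hx => (hv x hx).continuousAt.continuousWithinAt)
    (fun x hx => (hv x (Ico_subset_Icc_self hx)).hasDerivAt.hasDerivWithinAt)
    ha (fun _ => hasDerivAt_const _ _) hlevel

theorem lt_of_deriv_neg_at_level {v : ℝ → ℝ} {ε a b : ℝ}
    (hv : ∀ x ∈ Icc a b, DifferentiableAt ℝ v x) (hlevel : ∀ x ∈ Ico a b, v x = ε → deriv v x < 0)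
    (hb : ε < v b) : ∀ x ∈ Icc a b, ε < v x := by
  intro x hx
  by_contra! hvx
  have hsub : Icc x b ⊆ Icc a b := Icc_subset_Icc_left hx.1
  have := le_of_deriv_neg_at_level (fun y hy => hv y (hsub hy))
    (fun y hy => hlevel y ⟨hx.1.trans hy.1, hy.2⟩) hvx b ⟨hx.2, le_rfl⟩
  linarith

theorem mul_sub_one_le_deriv_rpow_one_sub {v : ℝ → ℝ} {C α x : ℝ} (hα : 1 ≤ α)
    (hv : DifferentiableAt ℝ v x) (hpos : 0 < v x) (hineq : deriv v x ≤ -C * v x ^ α) :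
    C * (α - 1) ≤ deriv (fun y => v y ^ (1 - α)) x := by
  rw [(hv.hasDerivAt.rpow_const (Or.inl hpos.ne')).deriv]
  have hfactor : (1 - α) * v x ^ (1 - α - 1) ≤ 0 :=
    mul_nonpos_of_nonpos_of_nonneg (by linarith) (Real.rpow_nonneg hpos.le _)
  have hcancel : v x ^ α * v x ^ (1 - α - 1) = 1 := by
    rw [← Real.rpow_add hpos, show α + (1 - α - 1) = 0 by ring, Real.rpow_zero]
  calc C * (α - 1) = -C * v x ^ α * ((1 - α) * v x ^ (1 - α - 1)) := by
        linear_combination (-(C * (α - 1))) * hcancel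
    _ ≤ deriv v x * ((1 - α) * v x ^ (1 - α - 1)) := mul_le_mul_of_nonpos_right hineq hfactor
    _ = deriv v x * (1 - α) * v x ^ (1 - α - 1) := by ring

theorem rpow_one_sub_add_mul_le {v : ℝ → ℝ} {C α a b : ℝ} (hα : 1 ≤ α) (hab : a ≤ b)
    (hv : ∀ x ∈ Icc a b, DifferentiableAt ℝ v x) (hpos : ∀ x ∈ Icc a b, 0 < v x)
    (hineq : ∀ x ∈ Icc a b, deriv v x ≤ -C * v x ^ α) :
    v a ^ (1 - α) + C * (α - 1) * (b - a) ≤ v b ^ (1 - α) := by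
  have hw : ∀ x ∈ Icc a b, DifferentiableAt ℝ (fun y => v y ^ (1 - α)) x :=
    fun x hx => (hv x hx).rpow_const (Or.inl (hpos x hx).ne')
  have := (convex_Icc a b).mul_sub_le_image_sub_of_le_deriv
    (fun x hx => (hw x hx).continuousAt.continuousWithinAt)
    (fun x hx => (hw x (interior_subset hx)).differentiableWithinAt)
    (fun x hx => mul_sub_one_le_deriv_rpow_one_sub hα (hv x (interior_subset hx))
      (hpos x (interior_subset hx)) (hineq x (interior_subset hx)))
    a (left_mem_Icc.2 hab) b (right_mem_Icc.2 hab) hab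
  linarith

theorem stmt1_general (C α : ℝ) (hC : 0 < C) (hα : 1 < α)
    (v : ℝ → ℝ)
    (hdiff : ∀ t, 0 ≤ t → DifferentiableAt ℝ v t)
    (hineq : ∀ t, 0 ≤ t → deriv v t ≤ -C * v t ^ α) :
    ∀ ε : ℝ, 0 < ε → ∀ t, ε ^ (1 - α) / (C * (α - 1)) ≤ t → v t ≤ ε := by
  intro ε hε t ht
  by_contra! hvt
  have hc : 0 < C * (α - 1) := mul_pos hC (by linarith)
  have ht0 : 0 ≤ t := (div_pos (Real.rpow_pos_of_pos hε _) hc).le.trans ht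
  have hdiff' : ∀ x ∈ Icc 0 t, DifferentiableAt ℝ v x := fun x hx => hdiff x hx.1
  have habove : ∀ x ∈ Icc 0 t, ε < v x :=
    lt_of_deriv_neg_at_level hdiff' (fun x hx hvx => (hineq x hx.1).trans_lt <| by
      rw [hvx]; exact mul_neg_of_neg_of_pos (neg_neg_of_pos hC) (Real.rpow_pos_of_pos hε α)) hvt
  have hgrowth := rpow_one_sub_add_mul_le hα.le ht0 hdiff'
    (fun x hx => hε.trans (habove x hx)) (fun x hx => hineq x hx.1)
  have hv0 : 0 < v 0 ^ (1 - α) := Real.rpow_pos_of_pos (hε.trans (habove 0 ⟨le_rfl, ht0⟩)) _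
  have hvt' : v t ^ (1 - α) < ε ^ (1 - α) := Real.rpow_lt_rpow_of_neg hε hvt (by linarith)
  have hεt : ε ^ (1 - α) ≤ C * (α - 1) * t := (div_le_iff₀' hc).1 ht
  linarith

/-- Fixed-time attractivity case `α > 1` of the Lyapunov comparison theorem: if a nonnegative
differentiable function `v` satisfies `v' ≤ -C v^α` on `[0,∞)`, then every sublevel set
`{v ≤ ε}` is reached within the uniform time `ε^{1-α}/(C(α-1))`, independently of `v 0`. -/
theorem stmt1 (C α : ℝ) (hC : 0 < C) (hα : 1 < α)
    (v : ℝ → ℝ)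
    (hnn : ∀ t, 0 ≤ t → 0 ≤ v t)
    (hdiff : ∀ t, 0 ≤ t → DifferentiableAt ℝ v t)
    (hineq : ∀ t, 0 ≤ t → deriv v t ≤ -C * v t ^ α) :
    ∀ ε : ℝ, 0 < ε → ∀ t, ε ^ (1 - α) / (C * (α - 1)) ≤ t → v t ≤ ε :=
  stmt1_general C α hC hα v hdiff hineq
end

section
/- Let C > 0, B > 0, α₁ > 1 and α₂ ∈ (0,1). Suppose v : [0,∞) → ℝ is nonnegative and differentiable, and its derivative satisfies v'(t) ≤ -C·v(t)^{α₁} whenever v(t) ≥ B, and v'(t) ≤ -C·v(t)^{α₂} whenever v(t) ≤ B. Then v(t) = 0 for every t ≥ T_u + T_f, where T_u = B^{1-α₁}/(C(α₁-1)) and T_f = B^{1-α₂}/(C(1-α₂)); in particular the settling time is bounded by the constant T_u + T_f independently of v(0). -/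
/-!
On any interval where `v > 0` and `v' ≤ -C v^α` with `α ≠ 1`, the function
`v^(1-α)/(1-α) + C t` is nonincreasing, so the length of the interval is at most
`(v(a)^(1-α) - v(b)^(1-α)) / (C(1-α))`. Both differential inequalities force `v' ≤ 0`,
so `v` is nonincreasing. With `α₁ > 1` the time spent above `B` is therefore less than
`B^(1-α₁)/(C(α₁-1)) = T_u` whatever `v(0)` is, and with `α₂ < 1` a solution starting at or
below `B` cannot stay positive for a time `B^(1-α₂)/(C(1-α₂)) = T_f`.
-/

open Real Set

section

variable {v : ℝ → ℝ} {a b C α : ℝ}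

theorem mul_sub_le_of_deriv_le_neg_mul_rpow (hα : α ≠ 1) (hab : a ≤ b)
    (hcont : ContinuousOn v (Icc a b)) (hdiff : DifferentiableOn ℝ v (Ioo a b))
    (hpos : ∀ x ∈ Icc a b, 0 < v x) (hderiv : ∀ x ∈ Ioo a b, deriv v x ≤ -C * v x ^ α) :
    C * (b - a) ≤ (v a ^ (1 - α) - v b ^ (1 - α)) / (1 - α) := by
  have h1α : 1 - α ≠ 0 := sub_ne_zero.mpr hα.symm
  have hanti : AntitoneOn (fun x => v x ^ (1 - α) / (1 - α) + C * x) (Icc a b) := by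
    refine antitoneOn_of_hasDerivWithinAt_nonpos (convex_Icc a b)
      (f' := fun x => deriv v x * (1 - α) * v x ^ (1 - α - 1) / (1 - α) + C * 1) ?_ ?_ ?_
    · exact ((hcont.rpow_const fun x hx => Or.inl (hpos x hx).ne').div_const _).add
        (continuousOn_const.mul continuousOn_id)
    · rw [interior_Icc]
      intro x hx
      have hvx := (hdiff.differentiableAt (isOpen_Ioo.mem_nhds hx)).hasDerivAt
      exact (((hvx.rpow_const (Or.inl (hpos x (Ioo_subset_Icc_self hx)).ne')).div_const _).add
        ((hasDerivAt_id x).const_mul C)).hasDerivWithinAt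
    · rw [interior_Icc]
      intro x hx
      have hvx := hpos x (Ioo_subset_Icc_self hx)
      have hpow : v x ^ α * v x ^ (1 - α - 1) = 1 := by
        rw [← rpow_add hvx]; simp
      have := mul_le_mul_of_nonneg_right (hderiv x hx) (rpow_pos_of_pos hvx (1 - α - 1)).le
      calc deriv v x * (1 - α) * v x ^ (1 - α - 1) / (1 - α) + C * 1
          = deriv v x * v x ^ (1 - α - 1) + C := by field_simp
        _ ≤ -C * v x ^ α * v x ^ (1 - α - 1) + C := by gcongr
        _ = 0 := by rw [mul_assoc, hpow]; ring
  have := hanti (left_mem_Icc.mpr hab) (right_mem_Icc.mpr hab) hab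
  simp only at this
  rw [sub_div]
  linarith

theorem le_of_deriv_le_neg_mul_rpow_of_one_lt {B : ℝ} (hC : 0 < C) (hB : 0 < B) (hα : 1 < α)
    (hcont : ContinuousOn v (Icc a b)) (hdiff : DifferentiableOn ℝ v (Ioo a b))
    (hanti : AntitoneOn v (Icc a b)) (hderiv : ∀ x ∈ Ioo a b, B ≤ v x → deriv v x ≤ -C * v x ^ α)
    (hT : B ^ (1 - α) / (C * (α - 1)) ≤ b - a) : v b ≤ B := by
  have hCα : 0 < C * (α - 1) := mul_pos hC (sub_pos.mpr hα)
  have hab : a ≤ b := sub_nonneg.mp ((div_pos (rpow_pos_of_pos hB _) hCα).le.trans hT)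
  by_contra! hBb
  have hgt : ∀ x ∈ Icc a b, B < v x := fun x hx =>
    hBb.trans_le (hanti hx (right_mem_Icc.mpr hab) hx.2)
  have hcomp := mul_sub_le_of_deriv_le_neg_mul_rpow hα.ne' hab hcont hdiff
    (fun x hx => hB.trans (hgt x hx)) fun x hx => hderiv x hx (hgt x (Ioo_subset_Icc_self hx)).le
  rw [← neg_div_neg_eq, neg_sub, neg_sub, le_div_iff₀ (sub_pos.mpr hα)] at hcomp
  rw [div_le_iff₀ hCα] at hT
  have hb : v b ^ (1 - α) < B ^ (1 - α) :=
    rpow_lt_rpow_of_neg hB (hgt b (right_mem_Icc.mpr hab)) (by linarith)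
  have ha : 0 < v a ^ (1 - α) := rpow_pos_of_pos (hB.trans (hgt a (left_mem_Icc.mpr hab))) _
  linarith

theorem eq_zero_of_deriv_le_neg_mul_rpow_of_lt_one (hC : 0 < C) (hα : α < 1) (hab : a ≤ b)
    (hcont : ContinuousOn v (Icc a b)) (hdiff : DifferentiableOn ℝ v (Ioo a b))
    (hanti : AntitoneOn v (Icc a b)) (hb : 0 ≤ v b)
    (hderiv : ∀ x ∈ Ioo a b, deriv v x ≤ -C * v x ^ α)
    (hT : v a ^ (1 - α) / (C * (1 - α)) ≤ b - a) : v b = 0 := by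
  by_contra! hne
  have hpos : ∀ x ∈ Icc a b, 0 < v x := fun x hx =>
    (hb.lt_of_ne' hne).trans_le (hanti hx (right_mem_Icc.mpr hab) hx.2)
  have hcomp := mul_sub_le_of_deriv_le_neg_mul_rpow hα.ne hab hcont hdiff hpos hderiv
  rw [le_div_iff₀ (sub_pos.mpr hα)] at hcomp
  rw [div_le_iff₀ (mul_pos hC (sub_pos.mpr hα))] at hT
  have := rpow_pos_of_pos (hpos b (right_mem_Icc.mpr hab)) (1 - α)
  linarith

end

theorem stmt2_general (C B α₁ α₂ : ℝ) (hC : 0 < C) (hB : 0 < B)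
    (hα₁ : 1 < α₁) (hα₂1 : α₂ < 1)
    (v : ℝ → ℝ)
    (hnn : ∀ t, 0 ≤ t → 0 ≤ v t)
    (hdiff : ∀ t, 0 ≤ t → DifferentiableAt ℝ v t)
    (hineq₁ : ∀ t, 0 ≤ t → B ≤ v t → deriv v t ≤ -C * v t ^ α₁)
    (hineq₂ : ∀ t, 0 ≤ t → v t ≤ B → deriv v t ≤ -C * v t ^ α₂) :
    ∀ t, B ^ (1 - α₁) / (C * (α₁ - 1)) + B ^ (1 - α₂) / (C * (1 - α₂)) ≤ t → v t = 0 := by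
  intro t ht
  set Tu := B ^ (1 - α₁) / (C * (α₁ - 1))
  set Tf := B ^ (1 - α₂) / (C * (1 - α₂))
  have hTu : 0 < Tu := div_pos (rpow_pos_of_pos hB _) (mul_pos hC (sub_pos.mpr hα₁))
  have hTf : 0 < Tf := div_pos (rpow_pos_of_pos hB _) (mul_pos hC (sub_pos.mpr hα₂1))
  have hcont : ContinuousOn v (Ici 0) := fun x hx => (hdiff x hx).continuousAt.continuousWithinAt
  have hdiffOn : DifferentiableOn ℝ v (Ici 0) := fun x hx => (hdiff x hx).differentiableWithinAt
  have hanti : AntitoneOn v (Ici 0) := by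
    refine antitoneOn_of_deriv_nonpos (convex_Ici 0) hcont (hdiffOn.mono interior_subset) ?_
    intro x hx
    have hx0 : 0 ≤ x := interior_subset hx
    rcases le_total B (v x) with hvx | hvx
    · nlinarith [hineq₁ x hx0 hvx, rpow_nonneg (hnn x hx0) α₁]
    · nlinarith [hineq₂ x hx0 hvx, rpow_nonneg (hnn x hx0) α₂]
  have hsub : ∀ {a b : ℝ}, 0 ≤ a → Icc a b ⊆ Ici 0 := fun ha =>
    Icc_subset_Ici_self.trans (Ici_subset_Ici.mpr ha)
  have hvTu : v Tu ≤ B :=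
    le_of_deriv_le_neg_mul_rpow_of_one_lt hC hB hα₁ (hcont.mono (hsub le_rfl))
      (hdiffOn.mono (Ioo_subset_Icc_self.trans (hsub le_rfl))) (hanti.mono (hsub le_rfl))
      (fun x hx => hineq₁ x hx.1.le) (sub_zero Tu).ge
  have h0t : 0 ≤ t := (add_pos hTu hTf).le.trans ht
  have hTut : Tu ≤ t := by linarith
  have hbelow : ∀ x ∈ Ioo Tu t, v x ≤ B := fun x hx =>
    (hanti hTu.le (hTu.trans hx.1).le hx.1.le).trans hvTu
  have hsettle : v Tu ^ (1 - α₂) / (C * (1 - α₂)) ≤ t - Tu :=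
    (div_le_div_of_nonneg_right (rpow_le_rpow (hnn Tu hTu.le) hvTu (sub_pos.mpr hα₂1).le)
      (mul_pos hC (sub_pos.mpr hα₂1)).le).trans (by linarith)
  exact eq_zero_of_deriv_le_neg_mul_rpow_of_lt_one hC hα₂1 hTut (hcont.mono (hsub hTu.le))
    (hdiffOn.mono (Ioo_subset_Icc_self.trans (hsub hTu.le))) (hanti.mono (hsub hTu.le))
    (hnn t h0t) (fun x hx => hineq₂ x (hTu.trans hx.1).le (hbelow x hx)) hsettle

/-- Two-phase scalar comparison estimate underlying the fixed-time controller: if a nonnegative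
differentiable `v` satisfies `v' ≤ -C v^{α₁}` (with `α₁ > 1`) whenever `v ≥ B` and
`v' ≤ -C v^{α₂}` (with `0 < α₂ < 1`) whenever `v ≤ B`, then `v` vanishes after the fixed time
`T_u + T_f = B^{1-α₁}/(C(α₁-1)) + B^{1-α₂}/(C(1-α₂))`, independently of `v 0`. -/
theorem stmt2 (C B α₁ α₂ : ℝ) (hC : 0 < C) (hB : 0 < B)
    (hα₁ : 1 < α₁) (hα₂0 : 0 < α₂) (hα₂1 : α₂ < 1)
    (v : ℝ → ℝ)
    (hnn : ∀ t, 0 ≤ t → 0 ≤ v t)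
    (hdiff : ∀ t, 0 ≤ t → DifferentiableAt ℝ v t)
    (hineq₁ : ∀ t, 0 ≤ t → B ≤ v t → deriv v t ≤ -C * v t ^ α₁)
    (hineq₂ : ∀ t, 0 ≤ t → v t ≤ B → deriv v t ≤ -C * v t ^ α₂) :
    ∀ t, B ^ (1 - α₁) / (C * (α₁ - 1)) + B ^ (1 - α₂) / (C * (1 - α₂)) ≤ t → v t = 0 :=
  stmt2_general C B α₁ α₂ hC hB hα₁ hα₂1 v hnn hdiff hineq₁ hineq₂
end

section
/- Let r ≥ 1, let p = (p_1,…,p_r) with each p_i > 0, and let Ω₁, Ω₂ : ℝ^r → ℝ be continuous functions that are homogeneous with respect to ζ_ε^p of degrees d₁ > 0 and d₂ > 0 respectively, with Ω₁ positive definite. Then the set S = {z ∈ ℝ^r : Ω₁(z) = 1} is nonempty and there exist z_min, z_max ∈ S such that for every z ∈ ℝ^r: Ω₂(z_min)·Ω₁(z)^{d₂/d₁} ≤ Ω₂(z) ≤ Ω₂(z_max)·Ω₁(z)^{d₂/d₁}. -/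
/-!
The weighted gauge `ρ(z) = max_i |z_i|^{1/p_i}` scales exactly linearly under the dilation,
`ρ(ζ_ε z) = ε ρ(z)`, so every orbit of the dilation on `ℝ^r ∖ 0` meets the compact set
`{ρ = 1}`. The ratio `Ω₂ / Ω₁^{d₂/d₁}` is constant on orbits and continuous off `0`, hence it
attains its extreme values on `ℝ^r ∖ 0` at points of `{ρ = 1}`; dilating these points onto
`{Ω₁ = 1}` gives `z_min` and `z_max`.
-/

open Set

variable {ι : Type*} {p : ι → ℝ}

/-- The anisotropic dilation `ζ_ε^p`. -/
noncomputable def dilation (p : ι → ℝ) (ε : ℝ) (z : ι → ℝ) : ι → ℝ := fun i => ε ^ p i * z i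

def IsDilationHomogeneous (p : ι → ℝ) (d : ℝ) (Ω : (ι → ℝ) → ℝ) : Prop :=
  ∀ (z : ι → ℝ) (ε : ℝ), 0 < ε → Ω (dilation p ε z) = ε ^ d * Ω z

/-- The weighted gauge `max_i |z_i|^{1/p_i}`, written as a sup norm. -/
noncomputable def dilationGauge [Fintype ι] (p : ι → ℝ) (z : ι → ℝ) : ℝ :=
  ‖fun i => |z i| ^ (p i)⁻¹‖

section Gauge

variable [Fintype ι]

theorem dilationGauge_dilation (hp : ∀ i, p i ≠ 0) (z : ι → ℝ) {ε : ℝ} (hε : 0 < ε) :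
    dilationGauge p (dilation p ε z) = ε * dilationGauge p z := by
  have hcoord : (fun i => |dilation p ε z i| ^ (p i)⁻¹) = ε • fun i => |z i| ^ (p i)⁻¹ := by
    funext i
    rw [dilation, abs_mul, abs_of_pos (Real.rpow_pos_of_pos hε _),
      Real.mul_rpow (Real.rpow_nonneg hε.le _) (abs_nonneg _), Real.rpow_rpow_inv hε.le (hp i),
      Pi.smul_apply, smul_eq_mul]
  rw [dilationGauge, hcoord, norm_smul, Real.norm_of_nonneg hε.le, dilationGauge]

theorem dilationGauge_eq_zero_iff (hp : ∀ i, p i ≠ 0) {z : ι → ℝ} :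
    dilationGauge p z = 0 ↔ z = 0 := by
  simp only [dilationGauge, norm_eq_zero, funext_iff, Pi.zero_apply,
    Real.rpow_eq_zero (abs_nonneg _) (inv_ne_zero (hp _)), abs_eq_zero]

theorem dilationGauge_pos (hp : ∀ i, p i ≠ 0) {z : ι → ℝ} (hz : z ≠ 0) :
    0 < dilationGauge p z :=
  (norm_nonneg _).lt_of_ne' ((dilationGauge_eq_zero_iff hp).not.2 hz)

theorem dilationGauge_one [Nonempty ι] : dilationGauge p 1 = 1 := by
  simp only [dilationGauge, Pi.one_apply, abs_one, Real.one_rpow]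
  exact norm_one

theorem continuous_dilationGauge (hp : ∀ i, 0 < p i) : Continuous (dilationGauge p) :=
  continuous_norm.comp <| continuous_pi fun i =>
    (continuous_apply i).abs.rpow_const fun _ => Or.inr (inv_pos.2 (hp i)).le

theorem isCompact_dilationGauge_eq_one (hp : ∀ i, 0 < p i) :
    IsCompact {z : ι → ℝ | dilationGauge p z = 1} := by
  refine Metric.isCompact_of_isClosed_isBounded
    (isClosed_eq (continuous_dilationGauge hp) continuous_const)
    ((Metric.isBounded_closedBall (x := 0) (r := 1)).subset fun z hz => ?_)
  rw [mem_closedBall_zero_iff, pi_norm_le_iff_of_nonneg zero_le_one]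
  intro i
  by_contra! hzi
  have hgt : 1 < |z i| ^ (p i)⁻¹ := Real.one_lt_rpow hzi (inv_pos.2 (hp i))
  have hle : |z i| ^ (p i)⁻¹ ≤ dilationGauge p z := by
    simpa [dilationGauge, abs_of_nonneg (Real.rpow_nonneg (abs_nonneg (z i)) _)] using
      norm_le_pi_norm (fun i => |z i| ^ (p i)⁻¹) i
  rw [show dilationGauge p z = 1 from hz] at hle
  linarith

theorem dilationGauge_dilation_inv (hp : ∀ i, p i ≠ 0) {z : ι → ℝ} (hz : z ≠ 0) :
    dilationGauge p (dilation p (dilationGauge p z)⁻¹ z) = 1 := by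
  have hpos := dilationGauge_pos hp hz
  rw [dilationGauge_dilation hp z (inv_pos.2 hpos), inv_mul_cancel₀ hpos.ne']

end Gauge

theorem exists_isMinOn_isMaxOn_of_dilation_invariant [Fintype ι] [Nonempty ι] (hp : ∀ i, 0 < p i)
    {g : (ι → ℝ) → ℝ} (hg : ContinuousOn g {0}ᶜ)
    (hinv : ∀ z : ι → ℝ, z ≠ 0 → ∀ ε : ℝ, 0 < ε → g (dilation p ε z) = g z) :
    ∃ wmin wmax : ι → ℝ, wmin ≠ 0 ∧ wmax ≠ 0 ∧ IsMinOn g {0}ᶜ wmin ∧ IsMaxOn g {0}ᶜ wmax := by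
  have hp' : ∀ i, p i ≠ 0 := fun i => (hp i).ne'
  set K := {z : ι → ℝ | dilationGauge p z = 1}
  have hK0 : K ⊆ {0}ᶜ := fun z hz h0 => by
    simp [K, (dilationGauge_eq_zero_iff hp').2 (mem_singleton_iff.1 h0)] at hz
  have hKne : K.Nonempty := ⟨1, dilationGauge_one⟩
  obtain ⟨wmin, hwmin, hmin⟩ :=
    (isCompact_dilationGauge_eq_one hp).exists_isMinOn hKne (hg.mono hK0)
  obtain ⟨wmax, hwmax, hmax⟩ :=
    (isCompact_dilationGauge_eq_one hp).exists_isMaxOn hKne (hg.mono hK0)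
  have horbit : ∀ z : ι → ℝ, z ≠ 0 → ∃ w ∈ K, g w = g z := fun z hz =>
    ⟨_, dilationGauge_dilation_inv hp' hz,
      hinv z hz _ (inv_pos.2 (dilationGauge_pos hp' hz))⟩
  refine ⟨wmin, wmax, hK0 hwmin, hK0 hwmax, isMinOn_iff.2 fun z hz => ?_,
    isMaxOn_iff.2 fun z hz => ?_⟩
  all_goals
    obtain ⟨w, hwK, hgw⟩ := horbit z hz
    rw [← hgw]
  exacts [hmin hwK, hmax hwK]

namespace IsDilationHomogeneous

variable {d d₁ d₂ : ℝ} {Ω Ω₁ Ω₂ : (ι → ℝ) → ℝ}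

theorem map_zero (h : IsDilationHomogeneous p d Ω) (hd : d ≠ 0) : Ω 0 = 0 := by
  have h0 : dilation p (Real.exp 1) (0 : ι → ℝ) = 0 := funext fun _ => mul_zero _
  have hfix := h 0 (Real.exp 1) (Real.exp_pos 1)
  rw [h0, Real.exp_one_rpow] at hfix
  have hexp : Real.exp d ≠ 1 := fun h1 => hd (Real.exp_eq_one_iff d |>.1 h1)
  by_contra hne
  exact hexp (mul_eq_right₀ hne |>.1 hfix.symm)

theorem exists_dilation_eq_one (h : IsDilationHomogeneous p d Ω) (hd : d ≠ 0) {z : ι → ℝ}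
    (hz : 0 < Ω z) : ∃ ε : ℝ, 0 < ε ∧ Ω (dilation p ε z) = 1 := by
  refine ⟨Ω z ^ (-d⁻¹), Real.rpow_pos_of_pos hz _, ?_⟩
  rw [h z _ (Real.rpow_pos_of_pos hz _), ← Real.rpow_mul hz.le, neg_mul, inv_mul_cancel₀ hd,
    Real.rpow_neg_one, inv_mul_cancel₀ hz.ne']

theorem div_rpow_dilation (h₁ : IsDilationHomogeneous p d₁ Ω₁)
    (h₂ : IsDilationHomogeneous p d₂ Ω₂) (hd₁ : d₁ ≠ 0) {z : ι → ℝ} (hz : 0 ≤ Ω₁ z)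
    {ε : ℝ} (hε : 0 < ε) :
    Ω₂ (dilation p ε z) / Ω₁ (dilation p ε z) ^ (d₂ / d₁) = Ω₂ z / Ω₁ z ^ (d₂ / d₁) := by
  have hscale : (ε ^ d₁) ^ (d₂ / d₁) = ε ^ d₂ := by
    rw [← Real.rpow_mul hε.le, mul_div_cancel₀ _ hd₁]
  rw [h₁ z ε hε, h₂ z ε hε, Real.mul_rpow (Real.rpow_nonneg hε.le _) hz, hscale,
    mul_div_mul_left _ _ (Real.rpow_pos_of_pos hε d₂).ne']

end IsDilationHomogeneous

theorem stmt3_general (r : ℕ) (hr : 1 ≤ r) (p : Fin r → ℝ) (hp : ∀ i, 0 < p i)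
    (d₁ d₂ : ℝ) (hd₁ : 0 < d₁) (hd₂ : 0 < d₂)
    (Ω₁ Ω₂ : (Fin r → ℝ) → ℝ)
    (hc₁ : Continuous Ω₁) (hc₂ : Continuous Ω₂)
    (hhom₁ : ∀ (z : Fin r → ℝ) (ε : ℝ), 0 < ε →
      Ω₁ (fun i => ε ^ p i * z i) = ε ^ d₁ * Ω₁ z)
    (hhom₂ : ∀ (z : Fin r → ℝ) (ε : ℝ), 0 < ε →
      Ω₂ (fun i => ε ^ p i * z i) = ε ^ d₂ * Ω₂ z)
    (hpd : ∀ z : Fin r → ℝ, z ≠ 0 → 0 < Ω₁ z) :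
    ∃ zmin zmax : Fin r → ℝ, Ω₁ zmin = 1 ∧ Ω₁ zmax = 1 ∧
      ∀ z : Fin r → ℝ,
        Ω₂ zmin * Ω₁ z ^ (d₂ / d₁) ≤ Ω₂ z ∧ Ω₂ z ≤ Ω₂ zmax * Ω₁ z ^ (d₂ / d₁) := by
  have : Nonempty (Fin r) := ⟨⟨0, hr⟩⟩
  have h₁ : IsDilationHomogeneous p d₁ Ω₁ := hhom₁
  have h₂ : IsDilationHomogeneous p d₂ Ω₂ := hhom₂
  set g : (Fin r → ℝ) → ℝ := fun z => Ω₂ z / Ω₁ z ^ (d₂ / d₁)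
  have hg : ContinuousOn g {0}ᶜ := fun z hz =>
    (hc₂.continuousAt.div (hc₁.continuousAt.rpow_const (Or.inl (hpd z hz).ne'))
      (Real.rpow_pos_of_pos (hpd z hz) _).ne').continuousWithinAt
  have hinv : ∀ z ≠ 0, ∀ ε : ℝ, 0 < ε → g (dilation p ε z) = g z := fun z hz ε hε =>
    h₁.div_rpow_dilation h₂ hd₁.ne' (hpd z hz).le hε
  obtain ⟨wmin, wmax, hwmin, hwmax, hmin, hmax⟩ :=
    exists_isMinOn_isMaxOn_of_dilation_invariant hp hg hinv
  have hnormalize : ∀ w ≠ 0, ∃ z, Ω₁ z = 1 ∧ Ω₂ z = g w := fun w hw => by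
    obtain ⟨ε, hε, hz⟩ := h₁.exists_dilation_eq_one hd₁.ne' (hpd w hw)
    refine ⟨_, hz, ?_⟩
    rw [← hinv w hw ε hε]
    simp [g, hz]
  obtain ⟨zmin, hzmin, hgmin⟩ := hnormalize wmin hwmin
  obtain ⟨zmax, hzmax, hgmax⟩ := hnormalize wmax hwmax
  refine ⟨zmin, zmax, hzmin, hzmax, fun z => ?_⟩
  rcases eq_or_ne z 0 with rfl | hz
  · simp [h₁.map_zero hd₁.ne', h₂.map_zero hd₂.ne', Real.zero_rpow (div_pos hd₂ hd₁).ne']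
  have hpos := Real.rpow_pos_of_pos (hpd z hz) (d₂ / d₁)
  rw [hgmin, hgmax, ← le_div_iff₀ hpos, ← div_le_iff₀ hpos]
  exact ⟨hmin hz, hmax hz⟩

/-- Lemma 4.2 of Bhat–Bernstein: if `Ω₁, Ω₂` are continuous, homogeneous of degrees `d₁, d₂ > 0`
with respect to the anisotropic dilation `ζ_ε^p`, and `Ω₁` is positive definite, then the unit
sphere `{Ω₁ = 1}` is nonempty and `Ω₂` is sandwiched between its min and max over that sphere,
scaled by `Ω₁^{d₂/d₁}`. -/
theorem stmt3 (r : ℕ) (hr : 1 ≤ r) (p : Fin r → ℝ) (hp : ∀ i, 0 < p i)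
    (d₁ d₂ : ℝ) (hd₁ : 0 < d₁) (hd₂ : 0 < d₂)
    (Ω₁ Ω₂ : (Fin r → ℝ) → ℝ)
    (hc₁ : Continuous Ω₁) (hc₂ : Continuous Ω₂)
    (hhom₁ : ∀ (z : Fin r → ℝ) (ε : ℝ), 0 < ε →
      Ω₁ (fun i => ε ^ p i * z i) = ε ^ d₁ * Ω₁ z)
    (hhom₂ : ∀ (z : Fin r → ℝ) (ε : ℝ), 0 < ε →
      Ω₂ (fun i => ε ^ p i * z i) = ε ^ d₂ * Ω₂ z)
    (hpd0 : Ω₁ 0 = 0) (hpd : ∀ z : Fin r → ℝ, z ≠ 0 → 0 < Ω₁ z) :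
    ∃ zmin zmax : Fin r → ℝ, Ω₁ zmin = 1 ∧ Ω₁ zmax = 1 ∧
      ∀ z : Fin r → ℝ,
        Ω₂ zmin * Ω₁ z ^ (d₂ / d₁) ≤ Ω₂ z ∧ Ω₂ z ≤ Ω₂ zmax * Ω₁ z ^ (d₂ / d₁) :=
  stmt3_general r hr p hp d₁ d₂ hd₁ hd₂ Ω₁ Ω₂ hc₁ hc₂ hhom₁ hhom₂ hpd
end

section
/- Let c > 0 and 0 ≤ α < 1, and let z : [0,∞) → ℝ be differentiable with z'(t) = -c·|z(t)|^α·sign(z(t)) for all t ≥ 0, where sign(x) = x/|x| for x ≠ 0 and sign(0) = 0. Then z(t) = 0 for every t ≥ |z(0)|^{1-α}/(c(1-α)); i.e. the solution converges to zero in finite time. -/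
private lemma sign_helper (x : ℝ) : x * Real.sign x = |x| := by
  rcases lt_trichotomy x 0 with h | h | h
  · rw [Real.sign_of_neg h, abs_of_neg h]; ring
  · simp [h]
  · rw [Real.sign_of_pos h, abs_of_pos h]; ring

private lemma comp_key (c α x : ℝ) (hx : x ≠ 0) :
    2 * x ^ 1 * (-c * |x| ^ α * Real.sign x) * ((1 - α) / 2) * (x ^ 2 : ℝ) ^ ((1 - α) / 2 - 1)
      = -(c * (1 - α)) := by
  have habs : (0:ℝ) < |x| := abs_pos.2 hx
  have hB : (x ^ 2 : ℝ) ^ ((1 - α) / 2 - 1) = |x| ^ (-1 - α) := by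
    rw [← sq_abs, ← Real.rpow_natCast |x| 2, ← Real.rpow_mul (abs_nonneg x)]
    congr 1; push_cast; ring
  have hA : |x| ^ α * |x| ^ (-1 - α) * |x| = 1 := by
    calc |x| ^ α * |x| ^ (-1 - α) * |x| = |x| ^ (α + (-1 - α) + 1) := by
          rw [Real.rpow_add habs, Real.rpow_add habs, Real.rpow_one]
      _ = 1 := by rw [show α + (-1 - α) + 1 = 0 by ring, Real.rpow_zero]
  rw [hB]
  have hre : 2 * x ^ 1 * (-c * |x| ^ α * Real.sign x) * ((1 - α) / 2) * |x| ^ (-1 - α)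
      = -(c * (1 - α)) * (|x| ^ α * |x| ^ (-1 - α) * (x * Real.sign x)) := by ring
  rw [hre, sign_helper, hA, mul_one]

/-- The one-dimensional homogeneous system `ż = -c⌊z⌉^α` with `0 ≤ α < 1` converges to zero in
finite time: `z(t) = 0` for all `t ≥ |z(0)|^{1-α}/(c(1-α))`. -/
theorem stmt7 (c α : ℝ) (hc : 0 < c) (hα0 : 0 ≤ α) (hα1 : α < 1)
    (z : ℝ → ℝ)
    (hode : ∀ t, 0 ≤ t → HasDerivAt z (-c * |z t| ^ α * Real.sign (z t)) t) :
    ∀ t, |z 0| ^ (1 - α) / (c * (1 - α)) ≤ t → z t = 0 := by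
  have h1α : (0:ℝ) < 1 - α := by linarith
  have hden : (0:ℝ) < c * (1 - α) := mul_pos hc h1α
  set T : ℝ := |z 0| ^ (1 - α) / (c * (1 - α)) with hTdef
  have hT0 : 0 ≤ T := div_nonneg (Real.rpow_nonneg (abs_nonneg _) _) hden.le
  -- Step A: once z hits 0, it stays 0.
  have absorbing : ∀ t0, 0 ≤ t0 → z t0 = 0 → ∀ t, t0 ≤ t → z t = 0 := by
    intro t0 ht0 hz0 t ht
    have hanti : AntitoneOn (fun u => z u ^ 2) (Set.Ici t0) := by
      have hderivW : ∀ x, 0 ≤ x →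
          HasDerivAt (fun u => z u ^ 2)
            ((2:ℕ) * z x ^ 1 * (-c * |z x| ^ α * Real.sign (z x))) x := by
        intro x hx
        exact (hode x hx).pow 2
      apply antitoneOn_of_deriv_nonpos (convex_Ici t0)
      · intro x hx
        exact ((hderivW x (le_trans ht0 hx)).continuousAt).continuousWithinAt
      · intro x hx
        rw [interior_Ici] at hx
        exact (hderivW x (le_trans ht0 hx.le)).differentiableAt.differentiableWithinAt
      · intro x hx
        rw [interior_Ici] at hx
        rw [(hderivW x (le_trans ht0 hx.le)).deriv]
        have hs : z x * Real.sign (z x) = |z x| := sign_helper (z x)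
        have h1 : ((2:ℕ) : ℝ) * z x ^ 1 * (-c * |z x| ^ α * Real.sign (z x))
            = -(2 * c * |z x| ^ α) * (z x * Real.sign (z x)) := by push_cast; ring
        rw [h1, hs]
        have : 0 ≤ 2 * c * |z x| ^ α :=
          mul_nonneg (by positivity) (Real.rpow_nonneg (abs_nonneg _) _)
        nlinarith [abs_nonneg (z x)]
    have hle : z t ^ 2 ≤ z t0 ^ 2 :=
      hanti (Set.self_mem_Ici) (Set.mem_Ici.2 ht) ht
    rw [hz0] at hle
    nlinarith [sq_nonneg (z t)]
  intro t ht
  by_cases hz0 : z 0 = 0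
  · exact absorbing 0 le_rfl hz0 t (le_trans hT0 ht)
  · -- z 0 ≠ 0 : show there is a zero in [0, T]
    have habs0 : (0:ℝ) < |z 0| := abs_pos.2 hz0
    have hTpos : 0 < T := div_pos (Real.rpow_pos_of_pos habs0 _) hden
    set β : ℝ := (1 - α) / 2 with hβ
    have hβpos : 0 < β := by positivity
    have hVeq : ∀ x : ℝ, (z x ^ 2 : ℝ) ^ β = |z x| ^ (1 - α) := by
      intro x
      rw [← sq_abs, ← Real.rpow_natCast |z x| 2, ← Real.rpow_mul (abs_nonneg _)]
      congr 1; push_cast; ring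
    have hzero : ∃ s ∈ Set.Icc (0:ℝ) T, z s = 0 := by
      by_contra hcon
      push_neg at hcon
      -- V has derivative -(c(1-α)) on (0,T)
      have hVd : ∀ x ∈ Set.Ioo (0:ℝ) T,
          HasDerivAt (fun u => (z u ^ 2 : ℝ) ^ β) (-(c * (1 - α))) x := by
        intro x hx
        have hxI : x ∈ Set.Icc (0:ℝ) T := ⟨hx.1.le, hx.2.le⟩
        have hne : z x ≠ 0 := hcon x hxI
        have hW : HasDerivAt (fun u => z u ^ 2)
            ((2:ℕ) * z x ^ 1 * (-c * |z x| ^ α * Real.sign (z x))) x :=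
          (hode x hx.1.le).pow 2
        have hV := hW.rpow_const (p := β) (Or.inl (pow_ne_zero 2 hne))
        have := comp_key c α (z x) hne
        convert hV using 1
        rw [← this]
        push_cast
        ring
      have hVc : ContinuousOn (fun u => (z u ^ 2 : ℝ) ^ β) (Set.Icc (0:ℝ) T) := by
        intro x hx
        have hz : ContinuousAt z x := (hode x hx.1).continuousAt
        have : ContinuousAt (fun u => (z u ^ 2 : ℝ) ^ β) x := by
          apply ContinuousAt.rpow_const (by fun_prop)
          exact Or.inr hβpos.le
        exact this.continuousWithinAt
      obtain ⟨ξ, hξ, hslope⟩ := exists_hasDerivAt_eq_slope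
        (fun u => (z u ^ 2 : ℝ) ^ β) (fun _ => -(c * (1 - α))) hTpos hVc hVd
      -- hslope : -(c(1-α)) = (V T - V 0)/(T - 0)
      have hVT : (z T ^ 2 : ℝ) ^ β = 0 := by
        have hT0' : (z 0 ^ 2 : ℝ) ^ β = |z 0| ^ (1 - α) := hVeq 0
        have hTne : T - 0 ≠ 0 := by linarith
        field_simp at hslope
        have : |z 0| ^ (1 - α) = c * (1 - α) * T := by
          rw [hTdef]; field_simp
        nlinarith [hslope, hT0', this]
      have hneT : z T ≠ 0 := hcon T ⟨hTpos.le, le_rfl⟩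
      have : (0:ℝ) < (z T ^ 2 : ℝ) ^ β :=
        Real.rpow_pos_of_pos (by positivity) _
      rw [hVT] at this
      exact lt_irrefl 0 this
    obtain ⟨s, hs, hzs⟩ := hzero
    exact absorbing s hs.1 hzs t (le_trans hs.2 ht)
end

section
/- Let c > 0 and α > 1, and let z : [0,∞) → ℝ be differentiable with z'(t) = -c·|z(t)|^α·sign(z(t)) for all t ≥ 0, where sign(x) = x/|x| for x ≠ 0 and sign(0) = 0. Then |z(t)| ≤ 1 for every t ≥ 1/(c(α-1)); i.e. the convergence time to the unit ball is uniformly bounded by the constant 1/(c(α-1)) independently of the initial condition z(0). -/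
/-!
Along a solution, `(z²)' = -2c|z|^(α+1) ≤ 0`, so `|z|` is nonincreasing. If `|z t| > 1`, then `z`
does not vanish on `[0, t]`, and there `|z|^(1-α)` grows with constant slope `c(α-1)`. Hence
`|z t|^(1-α) ≥ c(α-1)t ≥ 1`, contradicting `|z t| > 1`.
-/

open Set

namespace Real

lemma mul_sign_self (x : ℝ) : x * sign x = |x| := by
  rcases lt_trichotomy x 0 with h | rfl | h
  · rw [sign_of_neg h, abs_of_neg h, mul_neg_one]
  · simp
  · rw [sign_of_pos h, abs_of_pos h, mul_one]

lemma sign_mul_sign_self {x : ℝ} (hx : x ≠ 0) : sign x * sign x = 1 := by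
  rcases sign_apply_eq_of_ne_zero x hx with h | h <;> rw [h] <;> norm_num

lemma hasDerivAt_abs_sign {x : ℝ} (hx : x ≠ 0) : HasDerivAt (|·|) (sign x) x := by
  rcases hx.lt_or_gt with h | h
  · simpa [sign_of_neg h] using hasDerivAt_abs_neg h
  · simpa [sign_of_pos h] using hasDerivAt_abs_pos h

end Real

section HomogeneousODE

variable {c α : ℝ} {z : ℝ → ℝ}

lemma hasDerivAt_sq_of_ode {t : ℝ} (hz : HasDerivAt z (-c * |z t| ^ α * Real.sign (z t)) t) :
    HasDerivAt (fun s => z s ^ 2) (-(2 * c) * (|z t| ^ α * |z t|)) t := by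
  refine (hz.pow 2).congr_deriv ?_
  rw [← Real.mul_sign_self]
  push_cast
  ring

lemma antitoneOn_abs_of_ode (hc : 0 ≤ c)
    (hode : ∀ t, 0 ≤ t → HasDerivAt z (-c * |z t| ^ α * Real.sign (z t)) t) :
    AntitoneOn (fun t => |z t|) (Ici 0) := by
  have hsq : AntitoneOn (fun t => z t ^ 2) (Ici 0) := by
    refine antitoneOn_of_hasDerivWithinAt_nonpos (convex_Ici 0)
      (fun t ht => (hasDerivAt_sq_of_ode (hode t ht)).continuousAt.continuousWithinAt)
      (fun t ht => (hasDerivAt_sq_of_ode (hode t (interior_subset ht))).hasDerivWithinAt)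
      (fun t _ => ?_)
    have : 0 ≤ |z t| ^ α * |z t| := by positivity
    nlinarith
  exact fun s hs t ht hst => sq_le_sq.1 (hsq hs ht hst)

lemma hasDerivAt_abs_rpow_of_ode {t : ℝ}
    (hz : HasDerivAt z (-c * |z t| ^ α * Real.sign (z t)) t) (hzt : z t ≠ 0) :
    HasDerivAt (fun s => |z s| ^ (1 - α)) (c * (α - 1)) t := by
  have hpos : 0 < |z t| := abs_pos.2 hzt
  refine (((Real.hasDerivAt_abs_sign hzt).comp t hz).rpow_const (p := 1 - α)
    (Or.inl hpos.ne')).congr_deriv ?_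
  calc _ = c * (α - 1) * (Real.sign (z t) * Real.sign (z t))
          * (|z t| ^ α * |z t| ^ (1 - α - 1)) := by
        simp only [Function.comp_apply]
        ring
    _ = c * (α - 1) := by
        rw [Real.sign_mul_sign_self hzt, ← Real.rpow_add hpos]
        norm_num

lemma abs_rpow_eq_of_ode {t : ℝ} (ht : 0 < t)
    (hode : ∀ s, 0 ≤ s → HasDerivAt z (-c * |z s| ^ α * Real.sign (z s)) s)
    (hz : ∀ s ∈ Icc 0 t, z s ≠ 0) :
    |z t| ^ (1 - α) = |z 0| ^ (1 - α) + c * (α - 1) * t := by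
  have hderiv (s) (hs : s ∈ Icc 0 t) := hasDerivAt_abs_rpow_of_ode (hode s hs.1) (hz s hs)
  obtain ⟨-, -, hslope⟩ := exists_hasDerivAt_eq_slope (fun s => |z s| ^ (1 - α)) _ ht
    (fun s hs => (hderiv s hs).continuousAt.continuousWithinAt)
    (fun s hs => hderiv s (Ioo_subset_Icc_self hs))
  rw [sub_zero, eq_div_iff ht.ne'] at hslope
  linarith

end HomogeneousODE

/-- The one-dimensional homogeneous system `ż = -c⌊z⌉^α` with `α > 1` reaches the unit ball
within the fixed time `1/(c(α-1))`, uniformly in the initial condition. -/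
theorem stmt8 (c α : ℝ) (hc : 0 < c) (hα : 1 < α)
    (z : ℝ → ℝ)
    (hode : ∀ t, 0 ≤ t → HasDerivAt z (-c * |z t| ^ α * Real.sign (z t)) t) :
    ∀ t, 1 / (c * (α - 1)) ≤ t → |z t| ≤ 1 := by
  intro t ht
  by_contra! hzt
  have hk : 0 < c * (α - 1) := mul_pos hc (by linarith)
  have ht0 : 0 < t := lt_of_lt_of_le (by positivity) ht
  have hbig : ∀ s ∈ Icc 0 t, 1 < |z s| := fun s hs =>
    hzt.trans_le (antitoneOn_abs_of_ode hc.le hode hs.1 ht0.le hs.2)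
  have hformula := abs_rpow_eq_of_ode ht0 hode fun s hs => abs_pos.1 (one_pos.trans (hbig s hs))
  have hlt : |z t| ^ (1 - α) < 1 := Real.rpow_lt_one_of_one_lt_of_neg hzt (by linarith)
  have hkt : 1 ≤ c * (α - 1) * t := by rwa [div_le_iff₀ hk, mul_comm] at ht
  have hz0 : 0 ≤ |z 0| ^ (1 - α) := by positivity
  linarith
end

section
/- Let 0 < α < 1, c > 0, φ̄ ≥ 0, and 0 < γ_m ≤ γ_M. Define ω(z) = -c·|z|^α·sign(z) and u(z) = (1/γ_m)·(ω(z) + φ̄·sign(ω(z))), where sign(x) = x/|x| for x ≠ 0 and sign(0) = 0. Let z : [0,∞) → ℝ be differentiable and φ, γ : [0,∞) → ℝ satisfy |φ(t)| ≤ φ̄ and γ_m ≤ γ(t) ≤ γ_M for all t, with z'(t) = γ(t)·u(z(t)) + φ(t) for all t ≥ 0. Then there exists t* ≤ |z(0)|^{1-α}/(c(1-α)) such that z(t*) = 0; i.e. the controller forces the perturbed single integrator to reach zero in finite time, at a rate at least as fast as the unperturbed system ż = -c⌊z⌉^α. -/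
/-!
While `z` stays positive, the closed loop satisfies `ż ≤ -c z^α`: the term `φ̄ sign ω` dominates
the perturbation, and dividing by `γ_m` makes the gain `γ/γ_m ≥ 1` only speed the decay up.
Hence `z^(1-α) + c(1-α) t` is nonincreasing, which is impossible past
`t = z(0)^(1-α)/(c(1-α))` unless `z` has vanished by then. The closed loop is odd in `(z, φ)`,
so a negative start reduces to a positive one.
-/

open Set

theorem pos_of_ne_zero_of_continuousOn_Icc {f : ℝ → ℝ} {a b : ℝ}
    (hf : ContinuousOn f (Icc a b)) (hne : ∀ t ∈ Icc a b, f t ≠ 0) (ha : 0 < f a) :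
    ∀ t ∈ Icc a b, 0 < f t := by
  intro t ht
  by_contra! hle
  obtain ⟨s, hs, hfs⟩ := intermediate_value_Icc' ht.1 (hf.mono (Icc_subset_Icc le_rfl ht.2))
    ⟨hle, ha.le⟩
  exact hne s ⟨hs.1, hs.2.trans ht.2⟩ hfs

section FiniteTimeDecay

variable {f f' : ℝ → ℝ} {a b c α : ℝ}

theorem antitoneOn_rpow_one_sub_add_mul (hα : α ≤ 1)
    (hf : ∀ t ∈ Icc a b, HasDerivAt f (f' t) t) (hpos : ∀ t ∈ Icc a b, 0 < f t)
    (hf' : ∀ t ∈ Icc a b, f' t ≤ -c * f t ^ α) :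
    AntitoneOn (fun t => f t ^ (1 - α) + c * (1 - α) * t) (Icc a b) := by
  have hderiv : ∀ t ∈ Icc a b, HasDerivAt (fun t => f t ^ (1 - α) + c * (1 - α) * t)
      (f' t * (1 - α) * f t ^ (1 - α - 1) + c * (1 - α)) t := fun t ht =>
    ((hf t ht).rpow_const (Or.inl (hpos t ht).ne')).add
      ((hasDerivAt_id t).const_mul (c * (1 - α)) |>.congr_deriv (mul_one _))
  refine antitoneOn_of_hasDerivWithinAt_nonpos (convex_Icc a b)
    (fun t ht => (hderiv t ht).continuousAt.continuousWithinAt)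
    (fun t ht => (hderiv t (interior_subset ht)).hasDerivWithinAt) fun t ht => ?_
  have ht := interior_subset ht
  have hft := hpos t ht
  have hcancel : f t ^ α * f t ^ (1 - α - 1) = 1 := by
    rw [← Real.rpow_add hft]; norm_num
  have hdecay : f' t * f t ^ (1 - α - 1) ≤ -c := by
    calc f' t * f t ^ (1 - α - 1) ≤ -c * f t ^ α * f t ^ (1 - α - 1) :=
          mul_le_mul_of_nonneg_right (hf' t ht) (Real.rpow_nonneg hft.le _)
      _ = -c := by rw [mul_assoc, hcancel, mul_one]
  nlinarith

theorem rpow_one_sub_add_le_of_hasDerivAt_le (hab : a ≤ b) (hα : α ≤ 1)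
    (hf : ∀ t ∈ Icc a b, HasDerivAt f (f' t) t) (hpos : ∀ t ∈ Icc a b, 0 < f t)
    (hf' : ∀ t ∈ Icc a b, f' t ≤ -c * f t ^ α) :
    f b ^ (1 - α) + c * (1 - α) * (b - a) ≤ f a ^ (1 - α) := by
  have := antitoneOn_rpow_one_sub_add_mul hα hf hpos hf' (left_mem_Icc.2 hab)
    (right_mem_Icc.2 hab) hab
  simp only at this
  linarith

theorem exists_eq_zero_of_hasDerivAt_le_neg_mul_rpow (hc : 0 < c) (hα : α < 1) (hf0 : 0 ≤ f 0)
    (hf : ∀ t, 0 ≤ t → HasDerivAt f (f' t) t)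
    (hf' : ∀ t, 0 ≤ t → 0 < f t → f' t ≤ -c * f t ^ α) :
    ∃ t, 0 ≤ t ∧ t ≤ f 0 ^ (1 - α) / (c * (1 - α)) ∧ f t = 0 := by
  set T := f 0 ^ (1 - α) / (c * (1 - α))
  have hcα : 0 < c * (1 - α) := mul_pos hc (sub_pos.2 hα)
  have hT : 0 ≤ T := div_nonneg (Real.rpow_nonneg hf0 _) hcα.le
  by_contra! hne
  have hpos : ∀ t ∈ Icc 0 T, 0 < f t :=
    pos_of_ne_zero_of_continuousOn_Icc
      (fun t ht => (hf t ht.1).continuousAt.continuousWithinAt) (fun t ht => hne t ht.1 ht.2)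
      (hf0.lt_of_ne (hne 0 le_rfl hT).symm)
  have hdecay := rpow_one_sub_add_le_of_hasDerivAt_le hT hα.le (fun t ht => hf t ht.1) hpos
    fun t ht => hf' t ht.1 (hpos t ht)
  have hfT : 0 < f T ^ (1 - α) := Real.rpow_pos_of_pos (hpos T (right_mem_Icc.2 hT)) _
  have : c * (1 - α) * (T - 0) = f 0 ^ (1 - α) := by
    rw [sub_zero, mul_div_cancel₀ _ hcα.ne']
  linarith

end FiniteTimeDecay

/-- The controller `u` of the paper, with `ω(x) = -c⌊x⌉^α`. -/
noncomputable def robustControl (c α φbar γm x : ℝ) : ℝ :=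
  (1 / γm) * (-c * |x| ^ α * Real.sign x + φbar * Real.sign (-c * |x| ^ α * Real.sign x))

section RobustControl

variable {c α φbar γm γ φ x : ℝ}

theorem robustControl_neg : robustControl c α φbar γm (-x) = -robustControl c α φbar γm x := by
  simp only [robustControl, abs_neg, Real.sign_neg, mul_neg, neg_mul]
  ring

theorem mul_robustControl_add_le (hc : 0 < c) (hγm : 0 < γm) (hγ : γm ≤ γ)
    (hφ : |φ| ≤ φbar) (hx : 0 < x) :
    γ * robustControl c α φbar γm x + φ ≤ -c * x ^ α := by
  have hxα : 0 < x ^ α := Real.rpow_pos_of_pos hx α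
  have hω : -c * |x| ^ α * Real.sign x = -c * x ^ α := by
    rw [abs_of_pos hx, Real.sign_of_pos hx, mul_one]
  have hsign : Real.sign (-c * x ^ α) = -1 := Real.sign_of_neg (by nlinarith)
  have hu : robustControl c α φbar γm x = (-c * x ^ α - φbar) / γm := by
    rw [robustControl, hω, hsign]; ring
  have hφ' := abs_le.1 hφ
  have hX : -c * x ^ α - φbar ≤ 0 := by nlinarith
  have hdom : γ * ((-c * x ^ α - φbar) / γm) ≤ -c * x ^ α - φbar := by
    rw [mul_div_assoc', div_le_iff₀ hγm]
    nlinarith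
  rw [hu]
  linarith

end RobustControl

theorem stmt9_general (c α φbar γm γM : ℝ) (hc : 0 < c) (hα1 : α < 1)
    (hγm : 0 < γm)
    (z φ γ : ℝ → ℝ)
    (hφb : ∀ t, 0 ≤ t → |φ t| ≤ φbar)
    (hγb : ∀ t, 0 ≤ t → γm ≤ γ t ∧ γ t ≤ γM)
    (hode : ∀ t, 0 ≤ t → HasDerivAt z
      (γ t * ((1 / γm) * (-c * |z t| ^ α * Real.sign (z t) +
          φbar * Real.sign (-c * |z t| ^ α * Real.sign (z t)))) + φ t) t) :
    ∃ tstar : ℝ, 0 ≤ tstar ∧ tstar ≤ |z 0| ^ (1 - α) / (c * (1 - α)) ∧ z tstar = 0 := by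
  have hode : ∀ t, 0 ≤ t → HasDerivAt z (γ t * robustControl c α φbar γm (z t) + φ t) t := hode
  rcases le_total 0 (z 0) with hz0 | hz0
  · obtain ⟨t, ht0, htT, hzt⟩ := exists_eq_zero_of_hasDerivAt_le_neg_mul_rpow hc hα1 hz0 hode
      fun t ht hzt => mul_robustControl_add_le hc hγm (hγb t ht).1 (hφb t ht) hzt
    exact ⟨t, ht0, by rwa [abs_of_nonneg hz0], hzt⟩
  · obtain ⟨t, ht0, htT, hzt⟩ := exists_eq_zero_of_hasDerivAt_le_neg_mul_rpow (f := (-z ·)) hc hα1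
      (neg_nonneg.2 hz0) (fun t ht => (hode t ht).neg) fun t ht hzt => by
        rw [neg_add, ← mul_neg, ← robustControl_neg]
        exact mul_robustControl_add_le hc hγm (hγb t ht).1 (by rw [abs_neg]; exact hφb t ht) hzt
    exact ⟨t, ht0, by rwa [abs_of_nonpos hz0], neg_eq_zero.1 hzt⟩

/-- The controller `u(z) = (ω(z) + φ̄ sign(ω(z)))/γ_m` with `ω(z) = -c⌊z⌉^α`, `0 < α < 1`,
forces the perturbed single integrator `ż = γ(t) u(z) + φ(t)` (with `|φ| ≤ φ̄`,
`γ_m ≤ γ ≤ γ_M`) to reach zero in finite time, no later than the settling time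
`|z(0)|^{1-α}/(c(1-α))` of the unperturbed system `ż = -c⌊z⌉^α`. -/
theorem stmt9 (c α φbar γm γM : ℝ) (hc : 0 < c) (hα0 : 0 < α) (hα1 : α < 1)
    (hφ : 0 ≤ φbar) (hγm : 0 < γm) (hγ : γm ≤ γM)
    (z φ γ : ℝ → ℝ)
    (hφb : ∀ t, 0 ≤ t → |φ t| ≤ φbar)
    (hγb : ∀ t, 0 ≤ t → γm ≤ γ t ∧ γ t ≤ γM)
    (hode : ∀ t, 0 ≤ t → HasDerivAt z
      (γ t * ((1 / γm) * (-c * |z t| ^ α * Real.sign (z t) +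
          φbar * Real.sign (-c * |z t| ^ α * Real.sign (z t)))) + φ t) t) :
    ∃ tstar : ℝ, 0 ≤ tstar ∧ tstar ≤ |z 0| ^ (1 - α) / (c * (1 - α)) ∧ z tstar = 0 :=
  stmt9_general c α φbar γm γM hc hα1 hγm z φ γ hφb hγb hode
end

section
/- Fix an integer r ≥ 1, a constant c ≥ 2, and gains l_1,…,l_r > 0. Then for each i = 1,…,r there exists a constant k_i > 0, independent of κ, such that for every κ ∈ [-1/r, 1/r] (with p_j = 1 + (j-1)κ) and every z ∈ ℝ^r: W_i(z)^{(c+1)/(c+p_i)} ≤ k_i·(Σ_{j=1}^i |z_j|^{c/p_j})^{(c+1)/c}. -/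
/-- The `i`-th coordinate (0-based) of `z ∈ ℝ^r`, extended by `0` out of range. -/
noncomputable def coord (r : ℕ) (z : Fin r → ℝ) (i : ℕ) : ℝ :=
  if h : i < r then z ⟨i, h⟩ else 0

/-- `Ssum r κ c i z = Σ_{j=1}^{i} |z_j|^{c/p_j}` with `p_j = 1 + (j-1)κ` (paper 1-based
indices; `k` below is the 0-based index `j-1`). -/
noncomputable def Ssum (r : ℕ) (κ c : ℝ) (i : ℕ) (z : Fin r → ℝ) : ℝ :=
  ∑ k ∈ Finset.range i, |coord r z k| ^ (c / (1 + (k : ℝ) * κ))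

/-- The recursively defined virtual controls: `v_0 = 0` and
`v_i = -l_i N_i sign(z_i - v_{i-1})` with `N_i = (Ssum_i)^{(p_i+κ)/c}`, `p_i = 1 + (i-1)κ`.
The feedback is `ω_κ = vrec r κ c l r`. -/
noncomputable def vrec (r : ℕ) (κ c : ℝ) (l : ℕ → ℝ) : ℕ → (Fin r → ℝ) → ℝ
  | 0 => fun _ => 0
  | i + 1 => fun z =>
      -(l (i + 1)) * (Ssum r κ c (i + 1) z) ^ ((1 + (i : ℝ) * κ + κ) / c) *
        Real.sign (coord r z i - vrec r κ c l i z)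

/-- `⌊x⌉^β = |x|^β sign(x)`. -/
noncomputable def sgnPow (x β : ℝ) : ℝ := |x| ^ β * Real.sign x

/-- `W_i(z) = (Σ_{j=1}^{i-1} |z_j|^{c/p_j})|z_i - v_{i-1}| +
|⌊z_i⌉^{c/p_i+1} - ⌊v_{i-1}⌉^{c/p_i+1}|/(c/p_i+1)` (paper 1-based index `i`). -/
noncomputable def Wfun (r : ℕ) (κ c : ℝ) (l : ℕ → ℝ) : ℕ → (Fin r → ℝ) → ℝ
  | 0 => fun _ => 0
  | i + 1 => fun z =>
      Ssum r κ c i z * |coord r z i - vrec r κ c l i z| +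
        |sgnPow (coord r z i) (c / (1 + (i : ℝ) * κ) + 1) -
            sgnPow (vrec r κ c l i z) (c / (1 + (i : ℝ) * κ) + 1)| /
          (c / (1 + (i : ℝ) * κ) + 1)

/-- The dilation `ζ_ε^p` with weights `p_i = 1 + (i-1)κ` (0-based: `p_j = 1 + jκ`). -/
noncomputable def dil (r : ℕ) (κ ε : ℝ) (z : Fin r → ℝ) : Fin r → ℝ :=
  fun j => ε ^ (1 + (j : ℕ) * κ) * z j

/-- The Lyapunov function `V_κ(z) = Σ_{j=1}^{r} W_j(z)^{(c+1)/(c+p_j)}`. -/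
noncomputable def Vfun (r : ℕ) (κ c : ℝ) (l : ℕ → ℝ) (z : Fin r → ℝ) : ℝ :=
  ∑ j ∈ Finset.range r, (Wfun r κ c l (j + 1) z) ^ ((c + 1) / (c + 1 + (j : ℝ) * κ))

/-!
Both `z_i` and `v_{i-1}` are bounded by multiples of `S_i^{p_i/c}`, where
`S_i = Σ_{j ≤ i} |z_j|^{c/p_j}`, so each of the two terms of `W_i` is at most a multiple of
`S_i^{(c+p_i)/c}`; raising to the power `(c+1)/(c+p_i)` gives the claim. The constant does not
depend on `κ` because `p_i ≥ 1/r`, which keeps the exponent `c/p_i + 1` below `c r + 1`.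
-/

lemma abs_sign_le_one (x : ℝ) : |Real.sign x| ≤ 1 := by
  rcases Real.sign_apply_eq x with h | h | h <;> simp [h]

lemma abs_sgnPow_le (x β : ℝ) : |sgnPow x β| ≤ |x| ^ β := by
  rw [sgnPow, abs_mul, abs_of_nonneg (Real.rpow_nonneg (abs_nonneg x) β)]
  exact mul_le_of_le_one_right (Real.rpow_nonneg (abs_nonneg x) β) (abs_sign_le_one x)

lemma abs_sgnPow_sub_sgnPow_le (x y β : ℝ) :
    |sgnPow x β - sgnPow y β| ≤ |x| ^ β + |y| ^ β :=
  (abs_sub _ _).trans (add_le_add (abs_sgnPow_le x β) (abs_sgnPow_le y β))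

lemma rpow_le_of_le_mul_rpow {W K S c p : ℝ} (hc : 0 < c) (hp : 0 ≤ p) (hK : 1 ≤ K)
    (hS : 0 ≤ S) (hW₀ : 0 ≤ W) (hW : W ≤ K * S ^ (1 + p / c)) :
    W ^ ((c + 1) / (c + p)) ≤ K ^ ((c + 1) / c) * S ^ ((c + 1) / c) := by
  have hcp : 0 < c + p := by linarith
  calc W ^ ((c + 1) / (c + p))
      ≤ (K * S ^ (1 + p / c)) ^ ((c + 1) / (c + p)) := by gcongr
    _ = K ^ ((c + 1) / (c + p)) * S ^ ((c + 1) / c) := by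
      rw [Real.mul_rpow (by linarith) (Real.rpow_nonneg hS _), ← Real.rpow_mul hS]
      congr 2
      field_simp
    _ ≤ K ^ ((c + 1) / c) * S ^ ((c + 1) / c) := by
      gcongr ?_ * _
      exact Real.rpow_le_rpow_of_exponent_le hK
        (div_le_div_of_nonneg_left (by linarith) hc (le_add_of_nonneg_right hp))

lemma rpow_le_max_one_rpow {x β B : ℝ} (hx : 0 ≤ x) (hβ : 0 ≤ β) (hβB : β ≤ B) :
    x ^ β ≤ max 1 x ^ B :=
  (Real.rpow_le_rpow hx (le_max_right _ _) hβ).trans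
    (Real.rpow_le_rpow_of_exponent_le (le_max_left _ _) hβB)

lemma one_div_le_one_add_mul {r i : ℕ} {κ : ℝ} (hi : i < r) (hκ : -(1 / (r : ℝ)) ≤ κ) :
    1 / (r : ℝ) ≤ 1 + i * κ := by
  have hr : (0 : ℝ) < r := Nat.cast_pos.2 (by omega)
  have h₁ : (i : ℝ) * -(1 / r) ≤ i * κ := mul_le_mul_of_nonneg_left hκ (Nat.cast_nonneg i)
  have h₂ : ((i : ℝ) + 1) * (1 / r) ≤ 1 := by
    rw [mul_one_div, div_le_one hr]
    exact_mod_cast hi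
  linarith

section

variable {r : ℕ} {κ c : ℝ}

lemma Ssum_nonneg (i : ℕ) (z : Fin r → ℝ) : 0 ≤ Ssum r κ c i z :=
  Finset.sum_nonneg fun _ _ => Real.rpow_nonneg (abs_nonneg _) _

lemma Ssum_mono {i j : ℕ} (h : i ≤ j) (z : Fin r → ℝ) : Ssum r κ c i z ≤ Ssum r κ c j z :=
  Finset.sum_le_sum_of_subset_of_nonneg (Finset.range_mono h)
    fun _ _ _ => Real.rpow_nonneg (abs_nonneg _) _

lemma abs_coord_le_Ssum_rpow (hc : 0 < c) {i : ℕ} (hp : 0 < 1 + i * κ) (z : Fin r → ℝ) :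
    |coord r z i| ≤ Ssum r κ c (i + 1) z ^ ((1 + i * κ) / c) := by
  have hterm : |coord r z i| ^ (c / (1 + i * κ)) ≤ Ssum r κ c (i + 1) z :=
    Finset.single_le_sum (f := fun k => |coord r z k| ^ (c / (1 + (k : ℝ) * κ)))
      (fun _ _ => Real.rpow_nonneg (abs_nonneg _) _) (Finset.self_mem_range_succ i)
  calc |coord r z i| = (|coord r z i| ^ (c / (1 + i * κ))) ^ ((1 + i * κ) / c) := by
        rw [← Real.rpow_mul (abs_nonneg _), div_mul_div_cancel₀ hp.ne', div_self hc.ne',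
          Real.rpow_one]
    _ ≤ Ssum r κ c (i + 1) z ^ ((1 + i * κ) / c) := by gcongr

lemma abs_vrec_le (l : ℕ → ℝ) (i : ℕ) (z : Fin r → ℝ) :
    |vrec r κ c l i z| ≤ |l i| * Ssum r κ c i z ^ ((1 + i * κ) / c) := by
  cases i with
  | zero => simpa [vrec] using mul_nonneg (abs_nonneg _) (Real.rpow_nonneg (Ssum_nonneg 0 z) _)
  | succ m =>
    rw [vrec, abs_mul, abs_mul, abs_neg, abs_of_nonneg (Real.rpow_nonneg (Ssum_nonneg _ z) _)]
    push_cast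
    rw [show 1 + (m + 1) * κ = 1 + m * κ + κ by ring]
    exact mul_le_of_le_one_right
      (mul_nonneg (abs_nonneg _) (Real.rpow_nonneg (Ssum_nonneg _ z) _)) (abs_sign_le_one _)

lemma Wfun_succ_nonneg (hc : 0 < c) (l : ℕ → ℝ) {i : ℕ} (hp : 0 < 1 + i * κ) (z : Fin r → ℝ) :
    0 ≤ Wfun r κ c l (i + 1) z :=
  add_nonneg (mul_nonneg (Ssum_nonneg i z) (abs_nonneg _))
    (div_nonneg (abs_nonneg _) (by positivity))

lemma Wfun_succ_le (hc : 0 < c) (l : ℕ → ℝ) {i : ℕ} (hp : 0 < 1 + i * κ) (z : Fin r → ℝ) :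
    Wfun r κ c l (i + 1) z ≤
      (2 + |l i| + |l i| ^ (c / (1 + i * κ) + 1)) *
        Ssum r κ c (i + 1) z ^ (1 + (1 + i * κ) / c) := by
  set p : ℝ := 1 + i * κ
  set S := Ssum r κ c (i + 1) z
  set β := c / p + 1
  have hS : 0 ≤ S := Ssum_nonneg _ z
  have hβ : 1 ≤ β := le_add_of_nonneg_left (div_pos hc hp).le
  have hz : |coord r z i| ≤ 1 * S ^ (p / c) := by
    rw [one_mul]; exact abs_coord_le_Ssum_rpow hc hp z
  have hv : |vrec r κ c l i z| ≤ |l i| * S ^ (p / c) :=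
    (abs_vrec_le l i z).trans <| by
      gcongr
      · exact Ssum_nonneg i z
      · exact Ssum_mono (Nat.le_succ i) z
  have hmul : S * S ^ (p / c) = S ^ (1 + p / c) := by
    rw [Real.rpow_add' hS (by positivity), Real.rpow_one]
  have hpow {x a : ℝ} (ha : 0 ≤ a) (hx : |x| ≤ a * S ^ (p / c)) :
      |x| ^ β ≤ a ^ β * S ^ (1 + p / c) := by
    calc |x| ^ β ≤ (a * S ^ (p / c)) ^ β := by gcongr
      _ = a ^ β * S ^ (1 + p / c) := by
        rw [Real.mul_rpow ha (Real.rpow_nonneg hS _), ← Real.rpow_mul hS]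
        congr 2
        simp only [β]
        field_simp
  calc Wfun r κ c l (i + 1) z
      = Ssum r κ c i z * |coord r z i - vrec r κ c l i z| +
          |sgnPow (coord r z i) β - sgnPow (vrec r κ c l i z) β| / β := rfl
    _ ≤ S * (S ^ (p / c) + |l i| * S ^ (p / c)) +
          (|coord r z i| ^ β + |vrec r κ c l i z| ^ β) := by
      gcongr
      · exact Ssum_mono (Nat.le_succ i) z
      · exact (abs_sub _ _).trans (add_le_add (by simpa using hz) hv)
      · exact (div_le_self (abs_nonneg _) hβ).trans (abs_sgnPow_sub_sgnPow_le _ _ _)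
    _ ≤ S * (S ^ (p / c) + |l i| * S ^ (p / c)) +
          (1 ^ β * S ^ (1 + p / c) + |l i| ^ β * S ^ (1 + p / c)) := by
      gcongr
      · exact hpow zero_le_one hz
      · exact hpow (abs_nonneg _) hv
    _ = (2 + |l i| + |l i| ^ β) * S ^ (1 + p / c) := by
      rw [Real.one_rpow, ← hmul]; ring

end

theorem stmt13_general (r : ℕ) (c : ℝ) (hc : 2 ≤ c) (l : ℕ → ℝ) :
    ∀ i, i < r → ∃ k : ℝ, 0 < k ∧
      ∀ κ : ℝ, -(1 / (r : ℝ)) ≤ κ → κ ≤ 1 / (r : ℝ) →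
        ∀ z : Fin r → ℝ,
          (Wfun r κ c l (i + 1) z) ^ ((c + 1) / (c + 1 + (i : ℝ) * κ)) ≤
            k * (Ssum r κ c (i + 1) z) ^ ((c + 1) / c) := by
  intro i hi
  have hc₀ : 0 < c := by linarith
  have hr : (0 : ℝ) < r := Nat.cast_pos.2 (by omega)
  set B := c * r + 1
  set K := 2 + 2 * max 1 |l i| ^ B
  have hK : 1 ≤ K := by
    have := Real.one_le_rpow (le_max_left 1 |l i|) (by positivity : 0 ≤ B)
    linarith
  refine ⟨K ^ ((c + 1) / c), by positivity, fun κ hκ _ z => ?_⟩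
  have hp : 1 / (r : ℝ) ≤ 1 + i * κ := one_div_le_one_add_mul hi hκ
  have hp₀ : 0 < 1 + i * κ := lt_of_lt_of_le (by positivity) hp
  have hβB : c / (1 + i * κ) + 1 ≤ B := by
    have := div_le_div_of_nonneg_left hc₀.le (by positivity) hp
    rw [div_div_eq_mul_div, div_one] at this
    linarith
  have hcoeff : 2 + |l i| + |l i| ^ (c / (1 + i * κ) + 1) ≤ K := by
    have h₁ := rpow_le_max_one_rpow (abs_nonneg (l i)) zero_le_one
      (le_add_of_nonneg_left (by positivity) : (1 : ℝ) ≤ B)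
    have h₂ := rpow_le_max_one_rpow (abs_nonneg (l i)) (by positivity) hβB
    rw [Real.rpow_one] at h₁
    linarith
  rw [show c + 1 + i * κ = c + (1 + i * κ) by ring]
  exact rpow_le_of_le_mul_rpow hc₀ hp₀.le hK (Ssum_nonneg _ z) (Wfun_succ_nonneg hc₀ l hp₀ z)
    ((Wfun_succ_le hc₀ l hp₀ z).trans (by gcongr; exact Real.rpow_nonneg (Ssum_nonneg _ z) _))

/-- Uniform (in `κ ∈ [-1/r, 1/r]`) bound `W̄_i ≤ k_i |w_i|^{(c+1)/c}`: for each paper index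
`i = i'+1` there is a constant `k_i > 0`, independent of `κ`, with
`W_i^{(c+1)/(c+p_i)} ≤ k_i (Σ_{j=1}^i |z_j|^{c/p_j})^{(c+1)/c}` for all `z`. -/
theorem stmt13 (r : ℕ) (hr : 1 ≤ r) (c : ℝ) (hc : 2 ≤ c)
    (l : ℕ → ℝ) (hl : ∀ i, 1 ≤ i → i ≤ r → 0 < l i) :
    ∀ i, i < r → ∃ k : ℝ, 0 < k ∧
      ∀ κ : ℝ, -(1 / (r : ℝ)) ≤ κ → κ ≤ 1 / (r : ℝ) →
        ∀ z : Fin r → ℝ,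
          (Wfun r κ c l (i + 1) z) ^ ((c + 1) / (c + 1 + (i : ℝ) * κ)) ≤
            k * (Ssum r κ c (i + 1) z) ^ ((c + 1) / c) :=
  stmt13_general r c hc l
end
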